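/- Suppose r : ℝ × ℝ → ℝ is a smooth solution of mKdV (r_t − 6r² rₓ + r_{xxx} = 0). Define ρ(t,x) = ρ₀(t)·exp(∫₀^x r(t,s) ds) with ρ₀(t) = exp(∫₀^t (2r³ − r_{xx})(τ,0) dτ). Then ρ satisfies ρ_t = 2q ρₓ − qₓ ρ where q = rₓ + r², and ρ(0,x) = exp(∫₀^x r(0,s) ds). -/

import Mathlib

open intervalIntegral

/-- Partial derivative in the space variable. -/
noncomputable def pdx (f : ℝ → ℝ → ℝ) (t x : ℝ) : ℝ := deriv (f t) x

/-- Partial derivative in the time variable. -/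
noncomputable def pdt (f : ℝ → ℝ → ℝ) (t x : ℝ) : ℝ := deriv (fun s => f s x) t

/-- The mKdV expression `r_t − 6 r² rₓ + r_{xxx}`. -/
noncomputable def mKdVexpr (r : ℝ → ℝ → ℝ) (t x : ℝ) : ℝ :=
  pdt r t x - 6 * (r t x) ^ 2 * pdx r t x + deriv (deriv (deriv (r t))) x

/-- spatial partial derivative, joint form -/
noncomputable def Dx2 (f : ℝ × ℝ → ℝ) : ℝ × ℝ → ℝ := fun p => fderiv ℝ f p (0, 1)

/-- time partial derivative, joint form -/
noncomputable def Dt2 (f : ℝ × ℝ → ℝ) : ℝ × ℝ → ℝ := fun p => fderiv ℝ f p (1, 0)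

lemma Dx2_contDiff {f : ℝ × ℝ → ℝ} (hf : ContDiff ℝ (⊤ : ℕ∞) f) : ContDiff ℝ (⊤ : ℕ∞) (Dx2 f) :=
  (hf.fderiv_right (by simp)).clm_apply contDiff_const

lemma Dt2_contDiff {f : ℝ × ℝ → ℝ} (hf : ContDiff ℝ (⊤ : ℕ∞) f) : ContDiff ℝ (⊤ : ℕ∞) (Dt2 f) :=
  (hf.fderiv_right (by simp)).clm_apply contDiff_const

lemma hasDerivAt_Dx2 {f : ℝ × ℝ → ℝ} (hf : ContDiff ℝ (⊤ : ℕ∞) f) (t x : ℝ) :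
    HasDerivAt (fun y => f (t, y)) (Dx2 f (t, x)) x := by
  have h := (hf.differentiable (by simp) (t, x)).hasFDerivAt
  have h2 : HasDerivAt (fun y : ℝ => ((t, y) : ℝ × ℝ)) ((0, 1) : ℝ × ℝ) x :=
    (hasDerivAt_const x t).prodMk (hasDerivAt_id x)
  exact h.comp_hasDerivAt x h2

lemma hasDerivAt_Dt2 {f : ℝ × ℝ → ℝ} (hf : ContDiff ℝ (⊤ : ℕ∞) f) (t x : ℝ) :
    HasDerivAt (fun s => f (s, x)) (Dt2 f (t, x)) t := by
  have h := (hf.differentiable (by simp) (t, x)).hasFDerivAt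
  have h2 : HasDerivAt (fun s : ℝ => ((s, x) : ℝ × ℝ)) ((1, 0) : ℝ × ℝ) t :=
    (hasDerivAt_id t).prodMk (hasDerivAt_const t x)
  exact h.comp_hasDerivAt t h2

theorem stmt3 (r : ℝ → ℝ → ℝ)
    (hr : ContDiff ℝ (⊤ : ℕ∞) (fun p : ℝ × ℝ => r p.1 p.2))
    (hmKdV : ∀ t x : ℝ, mKdVexpr r t x = 0)
    (ρ : ℝ → ℝ → ℝ)
    (hρ : ∀ t x : ℝ, ρ t x =
      Real.exp (∫ τ in (0:ℝ)..t, (2 * (r τ 0) ^ 3 - deriv (deriv (r τ)) 0))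
        * Real.exp (∫ s in (0:ℝ)..x, r t s))
    (q : ℝ → ℝ → ℝ)
    (hq : ∀ t x : ℝ, q t x = pdx r t x + (r t x) ^ 2) :
    (∀ t x : ℝ, pdt ρ t x = 2 * q t x * pdx ρ t x - pdx q t x * ρ t x) ∧
    (∀ x : ℝ, ρ 0 x = Real.exp (∫ s in (0:ℝ)..x, r 0 s)) := by
  set R : ℝ × ℝ → ℝ := fun p => r p.1 p.2 with hR
  have hR1 : ContDiff ℝ (⊤ : ℕ∞) (Dx2 R) := Dx2_contDiff hr
  have hR2 : ContDiff ℝ (⊤ : ℕ∞) (Dx2 (Dx2 R)) := Dx2_contDiff hR1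
  have hR3 : ContDiff ℝ (⊤ : ℕ∞) (Dx2 (Dx2 (Dx2 R))) := Dx2_contDiff hR2
  have hRt : ContDiff ℝ (⊤ : ℕ∞) (Dt2 R) := Dt2_contDiff hr
  -- first spatial derivative
  have hd1 : ∀ t x, HasDerivAt (r t) (Dx2 R (t, x)) x := fun t x => hasDerivAt_Dx2 hr t x
  have e1 : ∀ t, deriv (r t) = fun x => Dx2 R (t, x) := fun t => funext fun x => (hd1 t x).deriv
  -- second spatial derivative
  have hd2 : ∀ t x, HasDerivAt (deriv (r t)) (Dx2 (Dx2 R) (t, x)) x := by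
    intro t x
    rw [e1 t]
    exact hasDerivAt_Dx2 hR1 t x
  have e2 : ∀ t, deriv (deriv (r t)) = fun x => Dx2 (Dx2 R) (t, x) :=
    fun t => funext fun x => (hd2 t x).deriv
  -- third spatial derivative
  have hd3 : ∀ t x, HasDerivAt (deriv (deriv (r t))) (Dx2 (Dx2 (Dx2 R)) (t, x)) x := by
    intro t x
    rw [e2 t]
    exact hasDerivAt_Dx2 hR2 t x
  have e3 : ∀ t x, deriv (deriv (deriv (r t))) x = Dx2 (Dx2 (Dx2 R)) (t, x) :=
    fun t x => (hd3 t x).deriv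
  -- time derivative
  have hdt : ∀ t x, HasDerivAt (fun s => r s x) (Dt2 R (t, x)) t := fun t x => hasDerivAt_Dt2 hr t x
  have et : ∀ t x, pdt r t x = Dt2 R (t, x) := fun t x => (hdt t x).deriv
  -- mKdV rewritten
  have hmk : ∀ t x, Dt2 R (t, x) = 6 * (r t x) ^ 2 * Dx2 R (t, x) - Dx2 (Dx2 (Dx2 R)) (t, x) := by
    intro t x
    have h := hmKdV t x
    rw [mKdVexpr, et, e3, pdx, (hd1 t x).deriv] at h
    linarith
  -- the integrand in ρ₀ and the conserved density
  set g : ℝ → ℝ := fun τ => 2 * (r τ 0) ^ 3 - deriv (deriv (r τ)) 0 with hgdef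
  have hgeq : ∀ τ, g τ = 2 * (r τ 0) ^ 3 - Dx2 (Dx2 R) (τ, 0) := by
    intro τ; rw [hgdef]; simp [e2 τ]
  set h : ℝ → ℝ → ℝ := fun t u => 2 * (r t u) ^ 3 - Dx2 (Dx2 R) (t, u) with hhdef
  have hg_cont : Continuous g := by
    have : Continuous fun τ => 2 * (r τ 0) ^ 3 - Dx2 (Dx2 R) (τ, 0) := by
      have h1 : Continuous fun τ : ℝ => ((τ, (0:ℝ)) : ℝ × ℝ) := continuous_id.prodMk continuous_const
      exact ((continuous_const.mul ((hr.continuous.comp h1).pow 3)).sub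
        (hR2.continuous.comp h1))
    exact this.congr fun τ => (hgeq τ).symm
  have hr_cont : ∀ t, Continuous (r t) := by
    intro t
    exact hr.continuous.comp (continuous_const.prodMk continuous_id)
  constructor
  · intro t x
    set c : ℝ := Real.exp (∫ τ in (0:ℝ)..t, g τ) with hc
    set B : ℝ := ∫ s in (0:ℝ)..x, r t s with hBdef
    -- spatial derivative of ρ
    have hBx : HasDerivAt (fun y => ∫ s in (0:ℝ)..y, r t s) (r t x) x :=
      ((hr_cont t).integral_hasStrictDerivAt 0 x).hasDerivAt
    have hρt : ρ t = fun y => c * Real.exp (∫ s in (0:ℝ)..y, r t s) :=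
      funext fun y => hρ t y
    have hρx : HasDerivAt (ρ t) (c * (Real.exp B * r t x)) x := by
      rw [hρt]
      exact (hBx.exp).const_mul c
    have epx : pdx ρ t x = c * (Real.exp B * r t x) := hρx.deriv
    -- spatial derivative of q
    have hqt : q t = fun y => Dx2 R (t, y) + (r t y) ^ 2 := by
      funext y
      rw [hq t y, pdx, (hd1 t y).deriv]
    have hqx : HasDerivAt (q t) (Dx2 (Dx2 R) (t, x) + 2 * r t x * Dx2 R (t, x)) x := by
      rw [hqt]
      have h1 : HasDerivAt (fun y => Dx2 R (t, y)) (Dx2 (Dx2 R) (t, x)) x := hasDerivAt_Dx2 hR1 t x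
      have h2 : HasDerivAt (fun y => (r t y) ^ 2) (2 * r t x * Dx2 R (t, x)) x := by
        have := (hd1 t x).fun_pow 2
        exact this.congr_deriv (by ring)
      exact h1.add h2
    have eqx : pdx q t x = Dx2 (Dx2 R) (t, x) + 2 * r t x * Dx2 R (t, x) := hqx.deriv
    have eq0 : q t x = Dx2 R (t, x) + (r t x) ^ 2 := by rw [hqt]
    -- time derivative of ρ
    have hA : HasDerivAt (fun u => ∫ τ in (0:ℝ)..u, g τ) (g t) t :=
      (hg_cont.integral_hasStrictDerivAt 0 t).hasDerivAt
    have hDtcont : Continuous (Dt2 R) := hRt.continuous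
    obtain ⟨C, hC⟩ : ∃ C, ∀ p ∈ (Metric.closedBall t 1) ×ˢ (Set.uIcc (0:ℝ) x), ‖Dt2 R p‖ ≤ C :=
      ((isCompact_closedBall t 1).prod isCompact_uIcc).exists_bound_of_continuousOn
        hDtcont.continuousOn
    have hB : HasDerivAt (fun s => ∫ u in (0:ℝ)..x, r s u) (∫ u in (0:ℝ)..x, Dt2 R (t, u)) t := by
      refine (intervalIntegral.hasDerivAt_integral_of_dominated_loc_of_deriv_le
        (F := fun s u => r s u) (F' := fun s u => Dt2 R (s, u)) (bound := fun _ => C)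
        (s := Metric.ball t 1) (Metric.ball_mem_nhds t one_pos) ?_ ?_ ?_ ?_ ?_ ?_).2
      · filter_upwards with s
        exact ((hr_cont s).aestronglyMeasurable).restrict
      · exact (hr_cont t).intervalIntegrable 0 x
      · exact ((hDtcont.comp (continuous_const.prodMk continuous_id)).aestronglyMeasurable).restrict
      · filter_upwards with u hu s hs
        exact hC (s, u) ⟨Metric.ball_subset_closedBall hs, Set.uIoc_subset_uIcc hu⟩
      · exact intervalIntegrable_const
      · filter_upwards with u _ s _
        exact hasDerivAt_Dt2 hr s u
    have hha : ∀ u, HasDerivAt (h t) (Dt2 R (t, u)) u := by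
      intro u
      have h1 : HasDerivAt (fun y => 2 * (r t y) ^ 3) (6 * (r t u) ^ 2 * Dx2 R (t, u)) u := by
        have := ((hd1 t u).fun_pow 3).const_mul 2
        exact this.congr_deriv (by ring)
      have h2 : HasDerivAt (fun y => Dx2 (Dx2 R) (t, y)) (Dx2 (Dx2 (Dx2 R)) (t, u)) u :=
        hasDerivAt_Dx2 hR2 t u
      have := h1.sub h2
      rw [hmk t u]
      exact this
    have hint : (∫ u in (0:ℝ)..x, Dt2 R (t, u)) = h t x - h t 0 := by
      apply intervalIntegral.integral_eq_sub_of_hasDerivAt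
      · intro u _
        exact hha u
      · exact (hDtcont.comp (continuous_const.prodMk continuous_id)).intervalIntegrable 0 x
    have hρtt : HasDerivAt (fun s => ρ s x)
        (c * g t * Real.exp B + c * (Real.exp B * (h t x - h t 0))) t := by
      have hfun : (fun s => ρ s x) = fun s =>
          Real.exp (∫ τ in (0:ℝ)..s, g τ) * Real.exp (∫ u in (0:ℝ)..x, r s u) :=
        funext fun s => hρ s x
      rw [hfun]
      have h1 := (hA.exp).fun_mul (hB.exp)
      rw [hint] at h1
      convert h1 using 1
    have ept : pdt ρ t x = c * g t * Real.exp B + c * (Real.exp B * (h t x - h t 0)) := hρtt.deriv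
    have hg0 : g t = h t 0 := by rw [hgeq t, hhdef]
    have hρval : ρ t x = c * Real.exp B := hρ t x
    rw [ept, epx, eqx, eq0, hρval, hg0, hhdef]
    ring
  · intro x
    rw [hρ 0 x, intervalIntegral.integral_same, Real.exp_zero, one_mul]
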